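/- Assume sup_{n≥1}l_n<∞. Then there exist constants c_3,c_4>0 such that c_3·ψ(r) ≤ μ(B(x,r)) ≤ c_4·ψ(r) for every x∈K and every 0<r≤2, where B(x,r):={y∈K: d(x,y)<r}. -/

import Mathlib

open Complex MeasureTheory Metric Set Filter Topology
open scoped ENNReal

noncomputable section

/-- The five reference points `q₀ = 0`, `q_j = exp((2j-1)πi/4)`. -/
def qpt (j : Fin 5) : ℂ :=
  if j = 0 then 0
  else Complex.exp (((2 * (j : ℕ) - 1 : ℕ) : ℂ) * Real.pi * Complex.I / 4)

/-- The closed unit square `K₀` with vertices `q₁, q₂, q₃, q₄`. -/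
def K0 : Set ℂ := convexHull ℝ {qpt 1, qpt 2, qpt 3, qpt 4}

/-- The digit set `S_l = {2 n l⁻¹ q_j : 0 ≤ n ≤ (l-1)/2, 1 ≤ j ≤ 4}`. -/
def Sdig (l : ℕ) : Set ℂ :=
  {z | ∃ n : ℕ, ∃ j : Fin 5, j ≠ 0 ∧ 2 * n ≤ l - 1 ∧
    z = ((2 * n : ℕ) : ℂ) / (l : ℂ) * qpt j}

/-- The elementary contraction `F_w^l(z) = w + l⁻¹ z`. -/
def Fl (l : ℕ) (w z : ℂ) : ℂ := w + z / (l : ℂ)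

/-- The composite contraction `F_w = F_{w₁}^{l₁} ∘ ⋯ ∘ F_{w_n}^{l_n}`. -/
def Fword (l : ℕ → ℕ) : (n : ℕ) → (Fin n → ℂ) → ℂ → ℂ
  | 0, _, z => z
  | n + 1, w, z => Fl (l 1) (w 0) (Fword (fun k => l (k + 1)) n (fun i => w i.succ) z)

/-- Admissible words: the `i`-th letter lies in `S_{l_{i+1}}`. -/
def IsWord (l : ℕ → ℕ) (n : ℕ) (w : Fin n → ℂ) : Prop :=
  ∀ i : Fin n, w i ∈ Sdig (l (i.val + 1))

/-- The scale-irregular Vicsek set `K = ⋂_{n≥1} ⋃_{w ∈ W_n} F_w(K₀)`. -/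
def VicsekK (l : ℕ → ℕ) : Set ℂ :=
  ⋂ n : ℕ, ⋃ w : Fin (n + 1) → ℂ, ⋃ _ : IsWord l (n + 1) w, Fword l (n + 1) w '' K0

/-- The cell `K_w = F_w(K₀) ∩ K`. -/
def cellK (l : ℕ → ℕ) (n : ℕ) (w : Fin n → ℂ) : Set ℂ :=
  Fword l n w '' K0 ∩ VicsekK l

/-- The vertex sets `V_0 = {q_j}`, `V_n = ⋃_{w ∈ W_n} F_w(V_0)`. -/
def Vset (l : ℕ → ℕ) : ℕ → Set ℂ
  | 0 => Set.range qpt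
  | n + 1 => ⋃ w : Fin (n + 1) → ℂ, ⋃ _ : IsWord l (n + 1) w,
      Fword l (n + 1) w '' Set.range qpt

/-- Adjacency in `V_n`: both points in `V_n` at distance `∏_{k=0}^n l_k⁻¹`. -/
def Adj (l : ℕ → ℕ) (n : ℕ) (x y : ℂ) : Prop :=
  x ∈ Vset l n ∧ y ∈ Vset l n ∧
    dist x y = ∏ k ∈ Finset.range (n + 1), ((l k : ℝ))⁻¹

/-- The discrete `p`-energy at level `n`:
`E_{p,n}(u) = (1/2) (∏_{j=0}^n l_j^(p-1)) ∑_{x∼y ∈ V_n} |u(x)-u(y)|^p`. -/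
def En (l : ℕ → ℕ) (p : ℝ) (n : ℕ) (u : ℂ → ℝ) : ℝ :=
  (1 / 2) * (∏ j ∈ Finset.range (n + 1), (l j : ℝ) ^ (p - 1)) *
    ∑' e : {e : ℂ × ℂ // Adj l n e.1 e.2}, |u e.val.1 - u e.val.2| ^ p

/-- Membership in the domain `F_p`: continuity on `K` together with
boundedness of the discrete energies (i.e. `sup_n E_{p,n}(u) < ∞`). -/
def MemFp (l : ℕ → ℕ) (p : ℝ) (u : ℂ → ℝ) : Prop :=
  ContinuousOn u (VicsekK l) ∧ BddAbove (Set.range fun n => En l p n u)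

/-- The `p`-energy `E_p(u) = sup_n E_{p,n}(u)`. -/
def Ep (l : ℕ → ℕ) (p : ℝ) (u : ℂ → ℝ) : ℝ := ⨆ n, En l p n u

/-- The standing assumptions on the scale sequence: `l₀ = 1` and each `l_k`
(`k ≥ 1`) is an odd integer `≥ 3`. -/
def GoodSeq (l : ℕ → ℕ) : Prop :=
  l 0 = 1 ∧ ∀ k, 1 ≤ k → 3 ≤ l k ∧ Odd (l k)

/-- `ρ_n = 2 ∏_{k=0}^n l_k⁻¹`. -/
def rhon (l : ℕ → ℕ) (n : ℕ) : ℝ := 2 * ∏ k ∈ Finset.range (n + 1), ((l k : ℝ))⁻¹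

/-- The index `n` such that `ρ_{n+1} < r ≤ ρ_n` (for `0 < r ≤ 2`). -/
def scaleIdx (l : ℕ → ℕ) (r : ℝ) : ℕ := sInf {m : ℕ | rhon l (m + 1) < r}

/-- `∏_{k=0}^n (2 l_k - 1)⁻¹`. -/
def psiN (l : ℕ → ℕ) (n : ℕ) : ℝ := ∏ k ∈ Finset.range (n + 1), (2 * (l k : ℝ) - 1)⁻¹

/-- The scale function `ψ`: for `ρ_{n+1} < r ≤ ρ_n`, `ψ(r) = ∏_{k=0}^n (2l_k-1)⁻¹`,
and `ψ(r) = 1` for `r ≥ 2`. -/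
def psi (l : ℕ → ℕ) (r : ℝ) : ℝ := if 2 ≤ r then 1 else psiN l (scaleIdx l r)

/-- `α_l = log(2l-1)/log l`. -/
def alphaExp (m : ℕ) : ℝ := Real.log (2 * (m : ℝ) - 1) / Real.log m

/- ### auxiliary lemmas -/

lemma sqrt2C : (Real.sqrt 2 : ℂ) * (Real.sqrt 2 : ℂ) = 2 := by
  have := Real.mul_self_sqrt (by norm_num : (0:ℝ) ≤ 2)
  exact_mod_cast congrArg (Complex.ofReal) this

lemma qpt_arg (j : Fin 5) (hj : j ≠ 0) :
    qpt j = Complex.exp ((((2 * (j : ℕ) - 1 : ℕ) : ℝ) * Real.pi / 4 : ℝ) * Complex.I) := by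
  rw [qpt, if_neg hj]
  congr 1
  push_cast
  ring

lemma q1 : qpt 1 = Complex.exp ((Real.pi / 4 : ℝ) * Complex.I) := by
  rw [qpt_arg 1 (by decide)]; norm_num

lemma q2 : qpt 2 = Complex.exp (((3 * Real.pi / 4 : ℝ)) * Complex.I) := by
  rw [qpt_arg 2 (by decide)]; norm_num

lemma q3 : qpt 3 = Complex.exp (((5 * Real.pi / 4 : ℝ)) * Complex.I) := by
  rw [qpt_arg 3 (by decide)]
  norm_num [show ((3:Fin 5):ℕ) = 3 from rfl]

lemma q4 : qpt 4 = Complex.exp (((7 * Real.pi / 4 : ℝ)) * Complex.I) := by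
  rw [qpt_arg 4 (by decide)]
  norm_num [show ((4:Fin 5):ℕ) = 4 from rfl]

lemma qpt_form (j : Fin 5) (hj : j ≠ 0) :
    ∃ ε ε' : ℤ, (ε = 1 ∨ ε = -1) ∧ (ε' = 1 ∨ ε' = -1) ∧
      (Real.sqrt 2 : ℂ) * qpt j = (ε : ℂ) + (ε' : ℂ) * Complex.I := by
  have hs2 := sqrt2C
  have hc1 := Real.cos_pi_div_four
  have hs1 := Real.sin_pi_div_four
  fin_cases j
  · exact absurd rfl hj
  · refine ⟨1, 1, Or.inl rfl, Or.inl rfl, ?_⟩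
    rw [show qpt ⟨1, by norm_num⟩ = qpt 1 from rfl, q1, Complex.exp_mul_I,
      ← Complex.ofReal_cos, ← Complex.ofReal_sin, hc1, hs1]
    push_cast
    linear_combination ((1 + Complex.I) / 2) * hs2
  · refine ⟨-1, 1, Or.inr rfl, Or.inl rfl, ?_⟩
    have hc : Real.cos (3 * Real.pi / 4) = -(Real.sqrt 2 / 2) := by
      rw [show 3 * Real.pi / 4 = Real.pi - Real.pi / 4 by ring, Real.cos_pi_sub, hc1]
    have hs : Real.sin (3 * Real.pi / 4) = Real.sqrt 2 / 2 := by
      rw [show 3 * Real.pi / 4 = Real.pi - Real.pi / 4 by ring, Real.sin_pi_sub, hs1]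
    rw [show qpt ⟨2, by norm_num⟩ = qpt 2 from rfl, q2, Complex.exp_mul_I,
      ← Complex.ofReal_cos, ← Complex.ofReal_sin, hc, hs]
    push_cast
    linear_combination ((-1 + Complex.I) / 2) * hs2
  · refine ⟨-1, -1, Or.inr rfl, Or.inr rfl, ?_⟩
    have hc : Real.cos (5 * Real.pi / 4) = -(Real.sqrt 2 / 2) := by
      rw [show 5 * Real.pi / 4 = Real.pi + Real.pi / 4 by ring, Real.cos_add,
        Real.cos_pi, Real.sin_pi, hc1]; ring
    have hs : Real.sin (5 * Real.pi / 4) = -(Real.sqrt 2 / 2) := by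
      rw [show 5 * Real.pi / 4 = Real.pi + Real.pi / 4 by ring, Real.sin_add,
        Real.cos_pi, Real.sin_pi, hs1]; ring
    rw [show qpt ⟨3, by norm_num⟩ = qpt 3 from rfl, q3, Complex.exp_mul_I,
      ← Complex.ofReal_cos, ← Complex.ofReal_sin, hc, hs]
    push_cast
    linear_combination ((-1 - Complex.I) / 2) * hs2
  · refine ⟨1, -1, Or.inl rfl, Or.inr rfl, ?_⟩
    have hc : Real.cos (7 * Real.pi / 4) = Real.sqrt 2 / 2 := by
      rw [show 7 * Real.pi / 4 = 2 * Real.pi - Real.pi / 4 by ring, Real.cos_sub,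
        Real.cos_two_pi, Real.sin_two_pi, hc1]; ring
    have hs : Real.sin (7 * Real.pi / 4) = -(Real.sqrt 2 / 2) := by
      rw [show 7 * Real.pi / 4 = 2 * Real.pi - Real.pi / 4 by ring, Real.sin_sub,
        Real.cos_two_pi, Real.sin_two_pi, hs1]; ring
    rw [show qpt ⟨4, by norm_num⟩ = qpt 4 from rfl, q4, Complex.exp_mul_I,
      ← Complex.ofReal_cos, ← Complex.ofReal_sin, hc, hs]
    push_cast
    linear_combination ((1 - Complex.I) / 2) * hs2

lemma qpt_abs (j : Fin 5) : ‖qpt j‖ ≤ 1 := by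
  by_cases hj : j = 0
  · simp [qpt, hj]
  · rw [qpt_arg j hj, Complex.norm_exp]
    simp

lemma K0_sub : K0 ⊆ Metric.closedBall (0 : ℂ) 1 := by
  apply convexHull_min _ (convex_closedBall _ _)
  intro z hz
  rw [mem_closedBall_zero_iff]
  simp only [mem_insert_iff, mem_singleton_iff] at hz
  rcases hz with rfl | rfl | rfl | rfl <;> exact qpt_abs _

lemma fword_eq (l : ℕ → ℕ) (m : ℕ) (w : Fin m → ℂ) (z : ℂ) :
    Fword l m w z = Fword l m w 0 + (∏ k ∈ Finset.range m, ((l (k+1) : ℂ))⁻¹) * z := by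
  induction m generalizing l with
  | zero => simp [Fword]
  | succ n ih =>
    simp only [Fword, Fl]
    rw [ih (fun k => l (k+1)) (fun i => w i.succ), Finset.prod_range_succ', add_div]
    ring

lemma fword_lattice (l : ℕ → ℕ) (m : ℕ) (w : Fin m → ℂ) (hl : ∀ k, 1 ≤ k → l k ≠ 0)
    (hw : IsWord l m w) :
    ∃ a b : ℤ, (Real.sqrt 2 : ℂ) * (∏ k ∈ Finset.range m, ((l (k+1) : ℕ) : ℂ)) *
      Fword l m w 0 = 2 * ((a : ℂ) + (b : ℂ) * Complex.I) := by
  induction m generalizing l with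
  | zero => exact ⟨0, 0, by simp [Fword]⟩
  | succ n ih =>
    obtain ⟨a', b', hab⟩ := ih (fun k => l (k+1)) (fun i => w i.succ)
      (fun k hk => hl (k+1) (by omega)) (fun i => hw i.succ)
    obtain ⟨nd, j, hj0, hnd, hw0⟩ := hw 0
    obtain ⟨ε, ε', hε, hε', hq⟩ := qpt_form j hj0
    have hL : (l 1 : ℂ) ≠ 0 := Nat.cast_ne_zero.mpr (hl 1 le_rfl)
    refine ⟨nd * (∏ k ∈ Finset.range n, (l (k+2) : ℤ)) * ε + a',
            nd * (∏ k ∈ Finset.range n, (l (k+2) : ℤ)) * ε' + b', ?_⟩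
    simp only [Fword, Fl]
    rw [Finset.prod_range_succ', hw0]
    simp only [Fin.val_zero, zero_add]
    have key : (Real.sqrt 2 : ℂ) * ((∏ k ∈ Finset.range n, ((l (k+1+1) : ℕ) : ℂ)) * (l 1 : ℂ)) *
        ((((2 * nd : ℕ) : ℂ)) / (l 1 : ℂ) * qpt j
          + Fword (fun k => l (k + 1)) n (fun i => w i.succ) 0 / (l 1 : ℂ))
        = ((2 * nd : ℕ) : ℂ) * (∏ k ∈ Finset.range n, ((l (k+1+1) : ℕ) : ℂ))
            * ((Real.sqrt 2 : ℂ) * qpt j)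
          + (Real.sqrt 2 : ℂ) * (∏ k ∈ Finset.range n, ((l (k+1+1) : ℕ) : ℂ)) *
            Fword (fun k => l (k + 1)) n (fun i => w i.succ) 0 := by
      field_simp
    rw [key, hq]
    rw [show (Real.sqrt 2 : ℂ) * (∏ k ∈ Finset.range n, ((l (k+1+1) : ℕ) : ℂ)) *
        Fword (fun k => l (k + 1)) n (fun i => w i.succ) 0 = 2 * ((a' : ℂ) + (b' : ℂ) * Complex.I)
      from hab]
    push_cast
    ring

lemma rhon_eq (l : ℕ → ℕ) (h0 : l 0 = 1) (n : ℕ) :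
    rhon l n = 2 * ∏ k ∈ Finset.range n, ((l (k+1) : ℝ))⁻¹ := by
  rw [rhon, Finset.prod_range_succ', h0]
  norm_num

lemma psiN_eq (l : ℕ → ℕ) (h0 : l 0 = 1) (n : ℕ) :
    psiN l n = ∏ k ∈ Finset.range n, (2 * (l (k+1) : ℝ) - 1)⁻¹ := by
  rw [psiN, Finset.prod_range_succ', h0]
  norm_num

lemma exists_rhon_lt (l : ℕ → ℕ) (h0 : l 0 = 1) (h3 : ∀ k, 1 ≤ k → 3 ≤ l k) {r : ℝ}
    (hr : 0 < r) : ∃ m : ℕ, rhon l (m + 1) < r := by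
  obtain ⟨m, hm⟩ := exists_pow_lt_of_lt_one (by linarith : (0:ℝ) < r / 2)
    (by norm_num : (1/3 : ℝ) < 1)
  refine ⟨m, ?_⟩
  have hb : ∏ k ∈ Finset.range (m+1), ((l (k+1) : ℝ))⁻¹
      ≤ ∏ k ∈ Finset.range (m+1), (1/3 : ℝ) := by
    apply Finset.prod_le_prod
    · intro k _; positivity
    · intro k _
      have h := h3 (k+1) (by omega)
      have h' : (3:ℝ) ≤ (l (k+1) : ℝ) := by exact_mod_cast h
      rw [one_div]
      exact inv_anti₀ (by norm_num) h'
  rw [Finset.prod_const] at hb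
  have h2 : (1/3 : ℝ)^(m+1) ≤ (1/3 : ℝ)^m :=
    pow_le_pow_of_le_one (by norm_num) (by norm_num) (Nat.le_succ m)
  rw [rhon_eq l h0]
  rw [Finset.card_range] at hb
  linarith

lemma scaleIdx_lt (l : ℕ → ℕ) (h0 : l 0 = 1) (h3 : ∀ k, 1 ≤ k → 3 ≤ l k) {r : ℝ}
    (hr : 0 < r) : rhon l (scaleIdx l r + 1) < r :=
  Nat.sInf_mem (exists_rhon_lt l h0 h3 hr)

lemma le_rhon_scaleIdx (l : ℕ → ℕ) (h0 : l 0 = 1) {r : ℝ} (hr2 : r ≤ 2) :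
    r ≤ rhon l (scaleIdx l r) := by
  rcases Nat.eq_zero_or_pos (scaleIdx l r) with h | h
  · rw [h, rhon_eq l h0]
    simpa using hr2
  · have hn : scaleIdx l r - 1 < scaleIdx l r := by omega
    have := Nat.notMem_of_lt_sInf (s := {m : ℕ | rhon l (m + 1) < r}) hn
    rw [mem_setOf_eq, not_lt] at this
    have he : scaleIdx l r - 1 + 1 = scaleIdx l r := by omega
    rwa [he] at this

lemma psi_eq (l : ℕ → ℕ) (h0 : l 0 = 1) (h3 : ∀ k, 1 ≤ k → 3 ≤ l k) {r : ℝ}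
    (hr2 : r ≤ 2) : psi l r = psiN l (scaleIdx l r) := by
  rw [psi]
  by_cases h : 2 ≤ r
  · rw [if_pos h]
    have hr : r = 2 := le_antisymm hr2 h
    subst hr
    have h01 : rhon l (0 + 1) < 2 := by
      rw [rhon_eq l h0]
      have h1 : (3:ℝ) ≤ (l 1 : ℝ) := by exact_mod_cast h3 1 le_rfl
      have : ((l 1 : ℝ))⁻¹ ≤ 3⁻¹ := inv_anti₀ (by norm_num) h1
      rw [Finset.prod_range_one]
      nlinarith
    have hz : scaleIdx l 2 = 0 := Nat.sInf_eq_zero.mpr (Or.inl h01)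
    rw [hz, psiN, Finset.prod_range_one, h0]
    norm_num
  · rw [if_neg h]

set_option maxHeartbeats 1000000 in
/-- If `sup_{n≥1} l_n < ∞` then `μ(B(x,r)) ≍ ψ(r)` for
`x ∈ K` and `0 < r ≤ 2`. -/
theorem ball_measure_psi (l : ℕ → ℕ) (hl : GoodSeq l)
    (M : ℕ) (hM : ∀ n, 1 ≤ n → l n ≤ M)
    (μ : Measure ℂ) [IsProbabilityMeasure μ] (hμK : μ (VicsekK l) = 1)
    (hμcell : ∀ m : ℕ, ∀ w : Fin m → ℂ, IsWord l m w →
      μ (cellK l m w) =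
        ENNReal.ofReal (∏ k ∈ Finset.range m, (2 * (l (k + 1) : ℝ) - 1)⁻¹)) :
    ∃ c₃ c₄ : ℝ, 0 < c₃ ∧ 0 < c₄ ∧ ∀ x ∈ VicsekK l, ∀ r : ℝ, 0 < r → r ≤ 2 →
      ENNReal.ofReal (c₃ * psi l r) ≤ μ (Metric.ball x r ∩ VicsekK l) ∧
      μ (Metric.ball x r ∩ VicsekK l) ≤ ENNReal.ofReal (c₄ * psi l r) := by
  classical
  obtain ⟨hl0, hlodd⟩ := hl
  have hl3 : ∀ k, 1 ≤ k → 3 ≤ l k := fun k hk => (hlodd k hk).1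
  have hM3 : 3 ≤ M := le_trans (hl3 1 le_rfl) (hM 1 le_rfl)
  have hMr : (3:ℝ) ≤ (M:ℝ) := by exact_mod_cast hM3
  refine ⟨(2*(M:ℝ) - 1)⁻¹, (6*(M:ℝ) + 1)^2, inv_pos.mpr (by linarith), by positivity, ?_⟩
  intro x hx r hr hr2
  set n := scaleIdx l r with hn
  have hρ1 : rhon l (n+1) < r := scaleIdx_lt l hl0 hl3 hr
  have hρ0 : r ≤ rhon l n := le_rhon_scaleIdx l hl0 hr2
  have hΛpos : (0:ℝ) < ∏ k ∈ Finset.range (n+1), ((l (k+1) : ℝ))⁻¹ := by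
    apply Finset.prod_pos
    intro k _
    have := hl3 (k+1) (by omega)
    have : (0:ℝ) < (l (k+1) : ℝ) := by exact_mod_cast Nat.lt_of_lt_of_le (by norm_num) this
    positivity
  set Λ : ℝ := ∏ k ∈ Finset.range (n+1), ((l (k+1) : ℝ))⁻¹ with hΛ
  have hΛC : (∏ k ∈ Finset.range (n+1), ((l (k+1) : ℂ))⁻¹) = ((Λ : ℝ) : ℂ) := by
    rw [hΛ]; push_cast; rfl
  have h2Λ : rhon l (n+1) = 2 * Λ := rhon_eq l hl0 (n+1)
  have hlM : (l (n+1) : ℝ) ≤ (M:ℝ) := by exact_mod_cast hM (n+1) (by omega)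
  have hln1 : (3:ℝ) ≤ (l (n+1) : ℝ) := by exact_mod_cast hl3 (n+1) (by omega)
  have hrM : r ≤ 2 * (M:ℝ) * Λ := by
    have e1 : rhon l n = 2 * (Λ * (l (n+1) : ℝ)) := by
      rw [rhon_eq l hl0 n, hΛ, Finset.prod_range_succ]
      have hne : ((l (n+1):ℝ)) ≠ 0 := by linarith
      field_simp
    have : r ≤ 2 * (Λ * (l (n+1) : ℝ)) := e1 ▸ hρ0
    nlinarith
  have hψ : psi l r = ∏ k ∈ Finset.range n, (2 * (l (k+1) : ℝ) - 1)⁻¹ := by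
    rw [psi_eq l hl0 hl3 hr2, psiN_eq l hl0]
  have hfacpos : ∀ k ∈ Finset.range (n+1), (0:ℝ) < (2 * (l (k+1) : ℝ) - 1)⁻¹ := by
    intro k _
    have : (3:ℝ) ≤ (l (k+1) : ℝ) := by exact_mod_cast hl3 (k+1) (by omega)
    have : (0:ℝ) < 2 * (l (k+1) : ℝ) - 1 := by linarith
    positivity
  have hPpos : (0:ℝ) < ∏ k ∈ Finset.range n, (2 * (l (k+1) : ℝ) - 1)⁻¹ :=
    Finset.prod_pos (fun k hk => hfacpos k (by simp at hk ⊢; omega))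
  have hVpos : (0:ℝ) < ∏ k ∈ Finset.range (n+1), (2 * (l (k+1) : ℝ) - 1)⁻¹ :=
    Finset.prod_pos hfacpos
  have hVP : (∏ k ∈ Finset.range (n+1), (2 * (l (k+1) : ℝ) - 1)⁻¹)
      = (∏ k ∈ Finset.range n, (2 * (l (k+1) : ℝ) - 1)⁻¹) * (2 * (l (n+1) : ℝ) - 1)⁻¹ :=
    Finset.prod_range_succ _ _
  have hfle1 : (2 * (l (n+1) : ℝ) - 1)⁻¹ ≤ 1 := by
    rw [inv_le_one_iff₀]; right; linarith
  have hV2 : (∏ k ∈ Finset.range (n+1), (2 * (l (k+1) : ℝ) - 1)⁻¹)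
      ≤ ∏ k ∈ Finset.range n, (2 * (l (k+1) : ℝ) - 1)⁻¹ := by
    rw [hVP]
    nlinarith
  have hV1 : (2*(M:ℝ) - 1)⁻¹ * (∏ k ∈ Finset.range n, (2 * (l (k+1) : ℝ) - 1)⁻¹)
      ≤ ∏ k ∈ Finset.range (n+1), (2 * (l (k+1) : ℝ) - 1)⁻¹ := by
    rw [hVP]
    have : (2*(M:ℝ) - 1)⁻¹ ≤ (2 * (l (n+1) : ℝ) - 1)⁻¹ :=
      inv_anti₀ (by linarith) (by linarith)
    nlinarith
  -- extract the cell containing x at level n+1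
  have hxn := Set.mem_iInter.mp hx n
  simp only [Set.mem_iUnion, Set.mem_image] at hxn
  obtain ⟨w, hw, z0, hz0, hxz⟩ := hxn
  constructor
  · -- lower bound
    have hcell : cellK l (n+1) w ⊆ Metric.ball x r ∩ VicsekK l := by
      rintro y ⟨⟨z1, hz1, rfl⟩, hyK⟩
      refine ⟨?_, hyK⟩
      rw [Metric.mem_ball, Complex.dist_eq, ← hxz, fword_eq l (n+1) w z1,
        fword_eq l (n+1) w z0, hΛC]
      have e : (Fword l (n+1) w 0 + ((Λ:ℝ):ℂ) * z1) - (Fword l (n+1) w 0 + ((Λ:ℝ):ℂ) * z0)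
          = ((Λ:ℝ):ℂ) * (z1 - z0) := by ring
      rw [e, norm_mul, Complex.norm_real, Real.norm_eq_abs, abs_of_pos hΛpos]
      have hz1' : ‖z1‖ ≤ 1 := mem_closedBall_zero_iff.mp (K0_sub hz1)
      have hz0' : ‖z0‖ ≤ 1 := mem_closedBall_zero_iff.mp (K0_sub hz0)
      have habs : ‖z1 - z0‖ ≤ 2 := by
        have h := norm_sub_le z1 z0
        linarith
      nlinarith [norm_nonneg (z1 - z0)]
    calc ENNReal.ofReal ((2*(M:ℝ) - 1)⁻¹ * psi l r)
        ≤ ENNReal.ofReal (∏ k ∈ Finset.range (n+1), (2 * (l (k+1) : ℝ) - 1)⁻¹) := by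
          apply ENNReal.ofReal_le_ofReal
          rw [hψ]
          exact hV1
      _ = μ (cellK l (n+1) w) := (hμcell (n+1) w hw).symm
      _ ≤ μ (Metric.ball x r ∩ VicsekK l) := measure_mono hcell
  · -- upper bound
    set N : ℕ := ∏ k ∈ Finset.range (n+1), l (k+1) with hN
    have hNpos : 0 < N := Finset.prod_pos (fun k _ => by have := hl3 (k+1) (by omega); omega)
    have hΛN : Λ * (N:ℝ) = 1 := by
      rw [hΛ, hN]
      push_cast
      rw [← Finset.prod_mul_distrib]
      rw [Finset.prod_congr rfl (fun k _ => inv_mul_cancel₀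
        (Nat.cast_ne_zero.mpr (by have := hl3 (k+1) (by omega); omega) :
          ((l (k+1):ℝ)) ≠ 0))]
      simp
    set s : ℝ := Real.sqrt 2 * Λ with hs
    have hspos : 0 < s := mul_pos (Real.sqrt_pos.mpr (by norm_num)) hΛpos
    have hsC : ((s:ℝ):ℂ) = (Real.sqrt 2 : ℂ) * ((Λ:ℝ):ℂ) := by rw [hs]; push_cast; rfl
    have hΛles : Λ ≤ s := by
      have h12 : (1:ℝ) ≤ Real.sqrt 2 := by
        have := Real.sqrt_le_sqrt (show (1:ℝ) ≤ 2 by norm_num)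
        rwa [Real.sqrt_one] at this
      nlinarith
    set ca : ℤ := ⌊x.re / s⌋ with hca
    set cb : ℤ := ⌊x.im / s⌋ with hcb
    set B : ℤ := 3 * M with hB
    set T : Finset ℂ := ((Finset.Icc (ca - B) (ca + B)) ×ˢ (Finset.Icc (cb - B) (cb + B))).image
        (fun p : ℤ × ℤ => ((s : ℝ) : ℂ) * ((p.1 : ℂ) + (p.2 : ℂ) * Complex.I)) with hT
    set U : ℂ → Set ℂ := fun c => ⋃ w : Fin (n+1) → ℂ,
        ⋃ _ : (IsWord l (n+1) w ∧ Fword l (n+1) w 0 = c), cellK l (n+1) w with hU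
    have hNC : ((N:ℕ):ℂ) = ∏ k ∈ Finset.range (n+1), ((l (k+1) : ℕ) : ℂ) := by
      rw [hN]; push_cast; rfl
    have hNne : ((N:ℕ):ℂ) ≠ 0 := Nat.cast_ne_zero.mpr hNpos.ne'
    have hs2ne : (Real.sqrt 2 : ℂ) ≠ 0 := by
      have : Real.sqrt 2 ≠ 0 := by positivity
      exact_mod_cast Complex.ofReal_ne_zero.mpr this
    have hΛNC : ((Λ:ℝ):ℂ) * ((N:ℕ):ℂ) = 1 := by
      have := congrArg Complex.ofReal hΛN
      push_cast at this
      exact_mod_cast this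
    have hUc : ∀ c : ℂ, μ (U c) ≤
        ENNReal.ofReal (∏ k ∈ Finset.range (n+1), (2 * (l (k+1) : ℝ) - 1)⁻¹) := by
      intro c
      by_cases hex : ∃ w : Fin (n+1) → ℂ, IsWord l (n+1) w ∧ Fword l (n+1) w 0 = c
      · obtain ⟨w₀, hw₀, hc₀⟩ := hex
        have hsub : U c ⊆ cellK l (n+1) w₀ := by
          rw [hU]
          apply Set.iUnion_subset; intro w'; apply Set.iUnion_subset; intro hPw
          have hfe : Fword l (n+1) w' = Fword l (n+1) w₀ := by
            funext z
            rw [fword_eq l (n+1) w' z, fword_eq l (n+1) w₀ z, hPw.2, hc₀]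
          rw [cellK, cellK, hfe]
        exact (measure_mono hsub).trans (le_of_eq (hμcell (n+1) w₀ hw₀))
      · have hsub : U c ⊆ ∅ := by
          rw [hU]
          apply Set.iUnion_subset; intro w'; apply Set.iUnion_subset; intro hPw
          exact absurd ⟨w', hPw⟩ hex
        calc μ (U c) ≤ μ ∅ := measure_mono hsub
          _ = 0 := measure_empty
          _ ≤ _ := zero_le'
    have hcover : Metric.ball x r ∩ VicsekK l ⊆ ⋃ c ∈ T, U c := by
      rintro y ⟨hyb, hyK⟩
      have hyn := Set.mem_iInter.mp hyK n
      simp only [Set.mem_iUnion, Set.mem_image] at hyn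
      obtain ⟨w', hw', z1, hz1, hyz⟩ := hyn
      obtain ⟨a, b, hab⟩ := fword_lattice l (n+1) w'
        (fun k hk => by have := hl3 k hk; omega) hw'
      rw [← hNC] at hab
      have hcs : Fword l (n+1) w' 0 = ((s:ℝ):ℂ) * ((a:ℂ) + (b:ℂ) * Complex.I) := by
        apply mul_left_cancel₀ (mul_ne_zero hs2ne hNne)
        rw [hsC]
        have hab' : (Real.sqrt 2 : ℂ) * ((N:ℕ):ℂ) * Fword l (n+1) w' 0
            = 2 * ((a : ℂ) + (b : ℂ) * Complex.I) := hab
        linear_combination hab' - 2*((a:ℂ)+(b:ℂ)*Complex.I) * hΛNC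
          - ((a:ℂ)+(b:ℂ)*Complex.I) * ((Λ:ℝ):ℂ) * ((N:ℕ):ℂ) * sqrt2C
      have hyc : ‖y - Fword l (n+1) w' 0‖ ≤ Λ := by
        rw [← hyz, fword_eq l (n+1) w' z1, hΛC]
        have e : (Fword l (n+1) w' 0 + ((Λ:ℝ):ℂ) * z1) - Fword l (n+1) w' 0
            = ((Λ:ℝ):ℂ) * z1 := by ring
        rw [e, norm_mul, Complex.norm_real, Real.norm_eq_abs, abs_of_pos hΛpos]
        have hz1' : ‖z1‖ ≤ 1 := mem_closedBall_zero_iff.mp (K0_sub hz1)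
        nlinarith [norm_nonneg z1]
      have hyx : ‖y - x‖ < r := by
        rw [← Complex.dist_eq]
        exact Metric.mem_ball.mp hyb
      have hcx : ‖Fword l (n+1) w' 0 - x‖ ≤ (2*(M:ℝ) + 1) * Λ := by
        have e : Fword l (n+1) w' 0 - x = -(y - Fword l (n+1) w' 0) + (y - x) := by ring
        calc ‖Fword l (n+1) w' 0 - x‖
            ≤ ‖-(y - Fword l (n+1) w' 0)‖ + ‖y - x‖ := by
              rw [e]; exact norm_add_le _ _
          _ = ‖y - Fword l (n+1) w' 0‖ + ‖y - x‖ := by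
              rw [norm_neg]
          _ ≤ Λ + r := by linarith
          _ ≤ (2*(M:ℝ) + 1) * Λ := by nlinarith
      have hre : (Fword l (n+1) w' 0).re = s * (a:ℝ) := by
        rw [hcs]
        simp [Complex.mul_re, Complex.add_re, Complex.add_im, Complex.mul_im]
      have him : (Fword l (n+1) w' 0).im = s * (b:ℝ) := by
        rw [hcs]
        simp [Complex.mul_re, Complex.add_re, Complex.add_im, Complex.mul_im]
      have hrea : |s * (a:ℝ) - x.re| ≤ (2*(M:ℝ) + 1) * Λ := by
        have := Complex.abs_re_le_norm (Fword l (n+1) w' 0 - x)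
        rw [Complex.sub_re, hre] at this
        linarith [this, hcx]
      have himb : |s * (b:ℝ) - x.im| ≤ (2*(M:ℝ) + 1) * Λ := by
        have := Complex.abs_im_le_norm (Fword l (n+1) w' 0 - x)
        rw [Complex.sub_im, him] at this
        linarith [this, hcx]
      have hbound : ∀ (t : ℝ) (e : ℤ), |s * (e:ℝ) - t| ≤ (2*(M:ℝ) + 1) * Λ →
          ⌊t / s⌋ - B ≤ e ∧ e ≤ ⌊t / s⌋ + B := by
        intro t e he
        have h1 : (⌊t / s⌋ : ℝ) ≤ t / s := Int.floor_le _
        have h2 : t / s < (⌊t / s⌋ : ℝ) + 1 := Int.lt_floor_add_one _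
        have h1' : (⌊t / s⌋ : ℝ) * s ≤ t := by
          rw [← le_div_iff₀ hspos]; exact h1
        have h2' : t < ((⌊t / s⌋ : ℝ) + 1) * s := by
          rw [← div_lt_iff₀ hspos]; exact h2
        obtain ⟨heL, heU⟩ := abs_le.mp he
        have hML : (2*(M:ℝ) + 1) * Λ ≤ (2*(M:ℝ) + 1) * s := by nlinarith
        constructor
        · have : ((⌊t / s⌋ : ℝ) - (2*(M:ℝ) + 2)) * s < (e:ℝ) * s := by nlinarith
          have h3 : (⌊t / s⌋ : ℝ) - (2*(M:ℝ) + 2) < (e:ℝ) :=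
            lt_of_mul_lt_mul_right (by linarith) hspos.le
          have h4 : ((⌊t / s⌋ - 2*(M:ℤ) - 2 : ℤ) : ℝ) < (e:ℝ) := by push_cast; linarith
          have h5 : ⌊t / s⌋ - 2*(M:ℤ) - 2 < e := by exact_mod_cast h4
          omega
        · have : (e:ℝ) * s < ((⌊t / s⌋ : ℝ) + (2*(M:ℝ) + 2)) * s := by nlinarith
          have h3 : (e:ℝ) < (⌊t / s⌋ : ℝ) + (2*(M:ℝ) + 2) :=
            lt_of_mul_lt_mul_right (by linarith) hspos.le
          have h4 : (e:ℝ) < ((⌊t / s⌋ + 2*(M:ℤ) + 2 : ℤ) : ℝ) := by push_cast; linarith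
          have h5 : e < ⌊t / s⌋ + 2*(M:ℤ) + 2 := by exact_mod_cast h4
          omega
      obtain ⟨haL, haU⟩ := hbound x.re a hrea
      obtain ⟨hbL, hbU⟩ := hbound x.im b himb
      have hcT : Fword l (n+1) w' 0 ∈ T := by
        rw [hT]
        apply Finset.mem_image.mpr
        refine ⟨(a, b), Finset.mem_product.mpr ⟨Finset.mem_Icc.mpr ⟨haL, haU⟩,
          Finset.mem_Icc.mpr ⟨hbL, hbU⟩⟩, hcs.symm⟩
      apply Set.mem_biUnion hcT
      rw [hU]
      exact Set.mem_iUnion.mpr ⟨w', Set.mem_iUnion.mpr ⟨⟨hw', rfl⟩, ⟨z1, hz1, hyz⟩, hyK⟩⟩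
    have hcard : T.card ≤ (6*M+1)^2 := by
      have h1 : (Finset.Icc (ca - B) (ca + B)).card = 6*M+1 := by
        rw [Int.card_Icc, hB]; omega
      have h2 : (Finset.Icc (cb - B) (cb + B)).card = 6*M+1 := by
        rw [Int.card_Icc, hB]; omega
      calc T.card ≤ ((Finset.Icc (ca - B) (ca + B)) ×ˢ (Finset.Icc (cb - B) (cb + B))).card :=
            Finset.card_image_le
        _ = (6*M+1) * (6*M+1) := by rw [Finset.card_product, h1, h2]
        _ = (6*M+1)^2 := (sq (6*M+1)).symm
    calc μ (Metric.ball x r ∩ VicsekK l) ≤ μ (⋃ c ∈ T, U c) := measure_mono hcover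
      _ ≤ ∑ c ∈ T, μ (U c) := measure_biUnion_finset_le _ _
      _ ≤ ∑ _c ∈ T, ENNReal.ofReal (∏ k ∈ Finset.range (n+1), (2 * (l (k+1) : ℝ) - 1)⁻¹) :=
          Finset.sum_le_sum (fun c _ => hUc c)
      _ = (T.card : ℝ≥0∞) * ENNReal.ofReal (∏ k ∈ Finset.range (n+1),
            (2 * (l (k+1) : ℝ) - 1)⁻¹) := by
          rw [Finset.sum_const, nsmul_eq_mul]
      _ ≤ (((6*M+1)^2 : ℕ) : ℝ≥0∞) * ENNReal.ofReal (∏ k ∈ Finset.range (n+1),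
            (2 * (l (k+1) : ℝ) - 1)⁻¹) :=
          mul_le_mul_left (by exact_mod_cast hcard) _
      _ ≤ ENNReal.ofReal ((6*(M:ℝ) + 1)^2 * psi l r) := by
          rw [← ENNReal.ofReal_natCast ((6*M+1)^2), ← ENNReal.ofReal_mul (by positivity)]
          apply ENNReal.ofReal_le_ofReal
          rw [hψ]
          have hcast : (((6*M+1)^2 : ℕ) : ℝ) = (6*(M:ℝ) + 1)^2 := by push_cast; ring
          rw [hcast]
          nlinarith [hV2, hPpos, hVpos]


end
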